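/- Let q = 2 and n \ge 2d+1. For all 0 \le i \le d-1 and 1 \le j \le d, the eigenvalues of the Grassmann graph satisfy |G_j(i+1)| < |G_j(i)|. -/

import Mathlib

/-!
Write `G_j(i) = ∑_{h ≤ j} (-1)^{j-h} T_i(h)` with summands `T_i(h) ≥ 0` that vanish for
`h > d - i`, and let `m = min j (d - i)`. For `q = 2` the sequences `T_i(h) - T_{i+1}(h)` and
`T_i(h) + T_{i+1}(h)` are nonnegative at `h = 0` and strictly increasing on `h ≤ m`, and an
alternating sum of such a sequence ending with a `+` sign is positive. Hence
`G_j(i) - G_j(i+1)` and `G_j(i) + G_j(i+1)` both have the sign of `(-1)^{j-m}`, which gives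
`|G_j(i+1)| < |G_j(i)|`.

The monotonicity is read off the ratios `T_i(h+1) / T_i(h) > 1` and `T_{i+1}(h) / T_i(h)`, which
is below `1` and nonincreasing in `h`. At `h + 1 = d - i`, where `T_{i+1}(h + 1) = 0`, the sum
needs the sharper `1 + T_{i+1}(h) / T_i(h) < T_i(h+1) / T_i(h)`. The two lower bounds on
`T_i(h+1) / T_i(h)` are where `q = 2` and `n ≥ 2d + 1` enter.
-/

/-- The Gaussian binomial coefficient `[m choose l]_q = ∏_{t=1}^{l} (q^{m-t+1}-1)/(q^t-1)`. -/
def gaussBinom (q : ℚ) (m l : ℕ) : ℚ :=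
  ∏ t ∈ Finset.range l, (q ^ (m - t) - 1) / (q ^ (t + 1) - 1)

/-- The eigenvalue `G_j(i)` of the Grassmann graph `G_q(n,d,j)`:
`G_j(i) = ∑_{h=0}^{j} (-1)^{j-h} q^{hi + C(j-h,2)} [d-i,h]_q [d-h,j-h]_q [n-d-i+h,h]_q`. -/
def grassG (q : ℚ) (n d j i : ℕ) : ℚ :=
  ∑ h ∈ Finset.range (j + 1),
    (-1 : ℚ) ^ (j - h) * q ^ (h * i + (j - h).choose 2) *
      gaussBinom q (d - i) h * gaussBinom q (d - h) (j - h) * gaussBinom q (n - d - i + h) h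

open Finset

theorem pow_sub_one_pos {R : Type*} [CommRing R] [LinearOrder R] [IsStrictOrderedRing R] {q : R}
    (hq : 1 < q) {k : ℕ} (hk : k ≠ 0) : 0 < q ^ k - 1 :=
  sub_pos.2 (one_lt_pow₀ hq hk)

section GaussBinom

variable {q : ℚ}

theorem gaussBinom_nonneg (hq : 1 ≤ q) (m l : ℕ) : 0 ≤ gaussBinom q m l :=
  prod_nonneg fun _ _ =>
    div_nonneg (sub_nonneg.2 (one_le_pow₀ hq)) (sub_nonneg.2 (one_le_pow₀ hq))

theorem gaussBinom_pos (hq : 1 < q) {m l : ℕ} (h : l ≤ m) : 0 < gaussBinom q m l :=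
  prod_pos fun t ht => div_pos (pow_sub_one_pos hq (by grind)) (pow_sub_one_pos hq t.succ_ne_zero)

theorem gaussBinom_eq_zero {m l : ℕ} (h : m < l) : gaussBinom q m l = 0 :=
  prod_eq_zero (mem_range.2 h) (by simp)

theorem gaussBinom_succ_right (m l : ℕ) :
    gaussBinom q m (l + 1) = gaussBinom q m l * ((q ^ (m - l) - 1) / (q ^ (l + 1) - 1)) :=
  prod_range_succ _ _

theorem gaussBinom_succ_succ_eq_div_mul (m l : ℕ) :
    gaussBinom q (m + 1) (l + 1) = (q ^ (m + 1) - 1) / (q ^ (l + 1) - 1) * gaussBinom q m l := by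
  rw [gaussBinom, gaussBinom, prod_div_distrib, prod_div_distrib,
    prod_range_succ' (fun t => q ^ (m + 1 - t) - 1), prod_range_succ (fun t => q ^ (t + 1) - 1),
    div_mul_div_comm, mul_comm (q ^ (m + 1) - 1), mul_comm (q ^ (l + 1) - 1)]
  simp only [Nat.add_sub_add_right, Nat.sub_zero]

theorem gaussBinom_mul_succ_eq (hq : 1 < q) (m l : ℕ) :
    gaussBinom q m l * (q ^ (m + 1) - 1) = gaussBinom q (m + 1) l * (q ^ (m + 1 - l) - 1) := by
  have hl := (pow_sub_one_pos hq l.succ_ne_zero).ne'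
  calc gaussBinom q m l * (q ^ (m + 1) - 1)
      = gaussBinom q (m + 1) (l + 1) * (q ^ (l + 1) - 1) := by
        rw [gaussBinom_succ_succ_eq_div_mul]; field_simp
    _ = gaussBinom q (m + 1) l * (q ^ (m + 1 - l) - 1) := by
        rw [gaussBinom_succ_right]; field_simp

end GaussBinom

section AlternatingSum

variable {R : Type*} [CommRing R]

theorem alternating_sum_succ (U : ℕ → R) (k : ℕ) :
    ∑ h ∈ range (k + 2), (-1) ^ (k + 1 - h) * U h =
      U (k + 1) - ∑ h ∈ range (k + 1), (-1) ^ (k - h) * U h := by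
  rw [sum_range_succ, Nat.sub_self, pow_zero, one_mul, sub_eq_add_neg, add_comm,
    ← sum_neg_distrib]
  congr 1
  refine sum_congr rfl fun h hh => ?_
  rw [show k + 1 - h = k - h + 1 by grind, pow_succ]
  ring

theorem neg_one_pow_mul_alternating_sum_of_eq_zero (U : ℕ → R) {m j : ℕ} (hmj : m ≤ j)
    (hU : ∀ h, m < h → h ≤ j → U h = 0) :
    (-1) ^ (j - m) * ∑ h ∈ range (j + 1), (-1) ^ (j - h) * U h =
      ∑ h ∈ range (m + 1), (-1) ^ (m - h) * U h := by
  have htrunc : ∑ h ∈ range (m + 1), (-1) ^ (j - h) * U h =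
      ∑ h ∈ range (j + 1), (-1) ^ (j - h) * U h :=
    sum_subset (range_subset_range.2 (by omega)) fun h hj hm => by
      rw [hU h (by simp at hm; omega) (by simp at hj; omega), mul_zero]
  rw [← htrunc, mul_sum]
  refine sum_congr rfl fun h hh => ?_
  rw [← mul_assoc, ← pow_add, show j - m + (j - h) = 2 * (j - m) + (m - h) by simp at hh; omega,
    pow_add, pow_mul, neg_one_sq, one_pow, one_mul]

variable [LinearOrder R] [IsStrictOrderedRing R]

theorem alternating_sum_nonneg_and_le (U : ℕ → R) (h0 : 0 ≤ U 0) :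
    ∀ k, (∀ h < k, U h ≤ U (h + 1)) →
      0 ≤ ∑ h ∈ range (k + 1), (-1) ^ (k - h) * U h ∧
        ∑ h ∈ range (k + 1), (-1) ^ (k - h) * U h ≤ U k
  | 0, _ => by simpa using h0
  | k + 1, hU => by
    obtain ⟨hnonneg, hle⟩ := alternating_sum_nonneg_and_le U h0 k fun h hh => hU h (by omega)
    rw [alternating_sum_succ]
    constructor <;> linarith [hU k k.lt_succ_self]

theorem alternating_sum_pos (U : ℕ → R) {m : ℕ} (hm : 0 < m) (h0 : 0 ≤ U 0)
    (hU : ∀ h < m, U h < U (h + 1)) : 0 < ∑ h ∈ range (m + 1), (-1) ^ (m - h) * U h := by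
  obtain ⟨k, rfl⟩ : ∃ k, m = k + 1 := ⟨m - 1, by omega⟩
  obtain ⟨-, hle⟩ := alternating_sum_nonneg_and_le U h0 k fun h hh => (hU h (by omega)).le
  rw [alternating_sum_succ]
  linarith [hU k k.lt_succ_self]

theorem abs_lt_abs_of_neg_one_pow_mul_pos {a b : R} (k : ℕ) (hsub : 0 < (-1) ^ k * (a - b))
    (hadd : 0 < (-1) ^ k * (a + b)) : |b| < |a| := by
  rcases neg_one_pow_eq_or R k with hk | hk <;> rw [hk] at hsub hadd
  · rw [abs_of_pos (by linarith : 0 < a)]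
    exact abs_lt.2 ⟨by linarith, by linarith⟩
  · rw [abs_of_neg (by linarith : a < 0)]
    exact abs_lt.2 ⟨by linarith, by linarith⟩

end AlternatingSum

def grassTerm (q : ℚ) (n d j i h : ℕ) : ℚ :=
  q ^ (h * i + (j - h).choose 2) * gaussBinom q (d - i) h * gaussBinom q (d - h) (j - h) *
    gaussBinom q (n - d - i + h) h

def stepRatio (q : ℚ) (n d j i h : ℕ) : ℚ :=
  q ^ i * (q ^ (d - i - h) - 1) * (q ^ (j - h) - 1) * (q ^ (n - d - i + h + 1) - 1) /
    (q ^ (j - h - 1) * (q ^ (h + 1) - 1) ^ 2 * (q ^ (d - h) - 1))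

def shiftRatio (q : ℚ) (n d i h : ℕ) : ℚ :=
  q ^ h * (q ^ (d - i - h) - 1) * (q ^ (n - d - i) - 1) /
    ((q ^ (d - i) - 1) * (q ^ (n - d - i + h) - 1))

section GrassTerm

variable {q : ℚ} {n d j i h : ℕ}

theorem grassG_eq_sum_grassTerm (q : ℚ) (n d j i : ℕ) :
    grassG q n d j i = ∑ h ∈ range (j + 1), (-1) ^ (j - h) * grassTerm q n d j i h := by
  simp only [grassG, grassTerm, mul_assoc]

theorem grassTerm_nonneg (hq : 1 ≤ q) : 0 ≤ grassTerm q n d j i h := by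
  have := gaussBinom_nonneg hq
  exact mul_nonneg (mul_nonneg (mul_nonneg (pow_nonneg (by linarith) _) (this _ _)) (this _ _))
    (this _ _)

theorem grassTerm_pos (hq : 1 < q) (hjd : j ≤ d) (hhj : h ≤ j) (hhi : h ≤ d - i) :
    0 < grassTerm q n d j i h :=
  mul_pos (mul_pos (mul_pos (pow_pos (by linarith) _) (gaussBinom_pos hq hhi))
    (gaussBinom_pos hq (by omega))) (gaussBinom_pos hq (by omega))

theorem grassTerm_eq_zero (hhi : d - i < h) : grassTerm q n d j i h = 0 := by
  rw [grassTerm, gaussBinom_eq_zero hhi, mul_zero, zero_mul, zero_mul]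

theorem grassTerm_succ_index_zero : grassTerm q n d j (i + 1) 0 = grassTerm q n d j i 0 := by
  simp [grassTerm, gaussBinom]

theorem grassTerm_succ (hq : 1 < q) (hhj : h < j) (hhd : h < d) :
    grassTerm q n d j i (h + 1) = stepRatio q n d j i h * grassTerm q n d j i h := by
  obtain ⟨y, rfl⟩ : ∃ y, j = h + 1 + y := ⟨j - h - 1, by omega⟩
  obtain ⟨e, rfl⟩ : ∃ e, d = h + 1 + e := ⟨d - h - 1, by omega⟩
  have hne : ∀ k, q ^ (k + 1) - 1 ≠ 0 := fun k => (pow_sub_one_pos hq k.succ_ne_zero).ne'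
  have : 0 < q := by linarith
  simp only [grassTerm, stepRatio, show h + 1 + y - h = y + 1 by omega,
    show h + 1 + y - (h + 1) = y by omega, show h + 1 + e - h = e + 1 by omega,
    show h + 1 + e - (h + 1) = e by omega, show y + 1 - 1 = y by omega, ← add_assoc]
  rw [gaussBinom_succ_right, gaussBinom_succ_succ_eq_div_mul (n - (h + 1 + e) - i + h),
    gaussBinom_succ_succ_eq_div_mul e y, Nat.choose_succ_succ', Nat.choose_one_right]
  field_simp [hne]
  ring

theorem grassTerm_succ_index (hq : 1 < q) (hid : i < d) (hin : d + i < n) :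
    grassTerm q n d j (i + 1) h = shiftRatio q n d i h * grassTerm q n d j i h := by
  obtain ⟨a, ha⟩ : ∃ a, d - i = a + 1 := ⟨d - i - 1, by omega⟩
  obtain ⟨b, hb⟩ : ∃ b, n - d - i = b + 1 := ⟨n - d - i - 1, by omega⟩
  have hne : ∀ k, q ^ (k + 1) - 1 ≠ 0 := fun k => (pow_sub_one_pos hq k.succ_ne_zero).ne'
  have hd : gaussBinom q a h = gaussBinom q (a + 1) h * (q ^ (a + 1 - h) - 1) / (q ^ (a + 1) - 1) :=
    eq_div_of_mul_eq (hne a) (gaussBinom_mul_succ_eq hq a h)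
  have hn : gaussBinom q (b + h) h =
      gaussBinom q (b + h + 1) h * (q ^ (b + 1) - 1) / (q ^ (b + h + 1) - 1) := by
    refine eq_div_of_mul_eq (hne _) ?_
    simpa [show b + h + 1 - h = b + 1 by omega] using gaussBinom_mul_succ_eq hq (b + h) h
  simp only [grassTerm, shiftRatio, ha, hb, show d - (i + 1) = a by omega,
    show n - d - (i + 1) = b by omega, show b + 1 + h = b + h + 1 by omega, hd, hn]
  field_simp [hne]
  ring

theorem shiftRatio_lt_one (hq : 1 < q) (hh : 0 < h) (hhi : h ≤ d - i) (hin : d + i < n) :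
    shiftRatio q n d i h < 1 := by
  have hsplit : q ^ h * q ^ (d - i - h) = q ^ (d - i) := by rw [← pow_add]; congr 1; omega
  rw [shiftRatio,
    div_lt_one (mul_pos (pow_sub_one_pos hq (by omega)) (pow_sub_one_pos hq (by omega)))]
  calc q ^ h * (q ^ (d - i - h) - 1) * (q ^ (n - d - i) - 1)
      < (q ^ (d - i) - 1) * (q ^ (n - d - i) - 1) := by
        refine mul_lt_mul_of_pos_right ?_ (pow_sub_one_pos hq (by omega))
        rw [mul_sub, hsplit, mul_one]
        linarith [one_lt_pow₀ hq hh.ne']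
    _ ≤ (q ^ (d - i) - 1) * (q ^ (n - d - i + h) - 1) :=
        mul_le_mul_of_nonneg_left (sub_le_sub_right (pow_le_pow_right₀ hq.le (by omega)) 1)
          (pow_sub_one_pos hq (by omega)).le

theorem shiftRatio_succ_le (hq : 1 < q) (hhi : h + 1 ≤ d - i) (hin : d + i < n) :
    shiftRatio q n d i (h + 1) ≤ shiftRatio q n d i h := by
  obtain ⟨x, hx⟩ : ∃ x, d - i - h = x + 1 := ⟨d - i - h - 1, by omega⟩
  set U := q ^ (n - d - i + h)
  have hX : 1 ≤ q ^ x := one_le_pow₀ hq.le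
  have hU : 1 ≤ U := one_le_pow₀ hq.le
  -- the difference of the two sides is `(q - 1) (q q^x U - 1)`
  have key : q * (q ^ x - 1) * (U - 1) ≤ (q * q ^ x - 1) * (q * U - 1) := by
    have : 1 ≤ q * q ^ x * U := one_le_mul_of_one_le_of_one_le
      (one_le_mul_of_one_le_of_one_le hq.le hX) hU
    nlinarith [mul_nonneg (sub_nonneg.2 hq.le) (sub_nonneg.2 this)]
  have hc : 0 ≤ q ^ h * (q ^ (n - d - i) - 1) * (q ^ (d - i) - 1) :=
    (mul_pos (mul_pos (pow_pos (by linarith) h) (pow_sub_one_pos hq (by omega)))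
      (pow_sub_one_pos hq (by omega))).le
  rw [shiftRatio, shiftRatio, div_le_div_iff₀
    (mul_pos (pow_sub_one_pos hq (by omega)) (pow_sub_one_pos hq (by omega)))
    (mul_pos (pow_sub_one_pos hq (by omega)) (pow_sub_one_pos hq (by omega))),
    show d - i - (h + 1) = x by omega, hx, show n - d - i + (h + 1) = n - d - i + h + 1 by omega,
    pow_succ, pow_succ, pow_succ]
  nlinarith [mul_le_mul_of_nonneg_left key hc]

end GrassTerm

section PowersOfTwo

variable {n d j i h : ℕ}

theorem one_lt_stepRatio (hn : 2 * d + 1 ≤ n) (hhj : h < j) (hhi : h + 1 ≤ d - i) :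
    1 < stepRatio 2 n d j i h := by
  rw [stepRatio, one_lt_div (mul_pos (mul_pos (by positivity)
    (pow_pos (pow_sub_one_pos one_lt_two h.succ_ne_zero) 2))
    (pow_sub_one_pos one_lt_two (by omega)))]
  set X : ℚ := 2 ^ (d - i - h)
  set S : ℚ := 2 ^ (h + 1)
  set Y : ℚ := 2 ^ (j - h - 1)
  set I : ℚ := 2 ^ i
  set C : ℚ := 2 ^ (n - d - i + h + 1)
  rw [show (2 : ℚ) ^ (j - h) = Y * 2 by rw [← pow_succ]; congr 1; omega,
    show (2 : ℚ) ^ (d - h) = X * I by rw [← pow_add]; congr 1; omega]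
  have hX : 2 ≤ X := le_self_pow₀ one_le_two (by omega)
  have hS : 2 ≤ S := le_self_pow₀ one_le_two (by omega)
  have hY : 1 ≤ Y := one_le_pow₀ one_le_two
  have hI : 1 ≤ I := one_le_pow₀ one_le_two
  have hC : X * S ^ 2 ≤ C := by
    simp only [X, S, C, ← pow_mul, ← pow_add]
    exact pow_le_pow_right₀ one_le_two (by omega)
  -- `X (S - 1)² ≤ (X - 1)(X S² - 1)` since the difference is `X S² (X - 2) + 2 X (S - 1) + 1`
  have key : X * (S - 1) ^ 2 ≤ (X - 1) * (X * S ^ 2 - 1) := by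
    nlinarith [mul_nonneg (mul_nonneg (by linarith : (0 : ℚ) ≤ X) (sq_nonneg S))
      (by linarith : 0 ≤ X - 2)]
  calc Y * (S - 1) ^ 2 * (X * I - 1)
      < I * Y * (X * (S - 1) ^ 2) := by nlinarith [sq_pos_of_pos (by linarith : (0 : ℚ) < S - 1)]
    _ ≤ I * Y * ((X - 1) * (X * S ^ 2 - 1)) := by gcongr
    _ ≤ I * (Y * 2 - 1) * ((X - 1) * (C - 1)) :=
        mul_le_mul (by gcongr; linarith) (by gcongr; linarith) (by nlinarith) (by nlinarith)
    _ = I * (X - 1) * (Y * 2 - 1) * (C - 1) := by ring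

theorem one_add_shiftRatio_lt_stepRatio (hn : 2 * d + 1 ≤ n) (hhj : h < j) (hhi : h + 1 = d - i) :
    1 + shiftRatio 2 n d i h < stepRatio 2 n d j i h := by
  rw [shiftRatio, stepRatio]
  set X : ℚ := 2 ^ h
  set Y : ℚ := 2 ^ (j - h - 1)
  set Z : ℚ := 2 ^ (n - d - i)
  set W : ℚ := 2 ^ i
  have hX : 1 ≤ X := one_le_pow₀ one_le_two
  have hY : 1 ≤ Y := one_le_pow₀ one_le_two
  have hW : 1 ≤ W := one_le_pow₀ one_le_two
  have hZ : 4 * X ≤ Z := by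
    rw [show (4 : ℚ) = 2 ^ 2 by norm_num, ← pow_add]
    exact pow_le_pow_right₀ one_le_two (by omega)
  rw [show (2 : ℚ) ^ (d - i - h) = 2 by rw [show d - i - h = 1 by omega, pow_one],
    show (2 : ℚ) ^ (d - i) = X * 2 by rw [← hhi, pow_succ],
    show (2 : ℚ) ^ (h + 1) = X * 2 from pow_succ _ _,
    show (2 : ℚ) ^ (n - d - i + h) = Z * X from pow_add _ _ _,
    show (2 : ℚ) ^ (n - d - i + h + 1) = Z * X * 2 by rw [pow_succ, pow_add],
    show (2 : ℚ) ^ (j - h) = Y * 2 by rw [← pow_succ]; congr 1; omega,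
    show (2 : ℚ) ^ (d - h) = W * 2 by rw [← pow_succ]; congr 1; omega]
  norm_num only [mul_one]
  have hA : 0 < X * 2 - 1 := by linarith
  have hB : 0 < Z * X - 1 := by nlinarith
  -- the middle bound drops the factors `W / (2 W - 1) > 1 / 2` and `(2 Y - 1) / Y ≥ 1`
  calc 1 + X * (Z - 1) / ((X * 2 - 1) * (Z * X - 1))
      ≤ (Z * X * 2 - 1) / (2 * (X * 2 - 1) ^ 2) := by
        rw [one_add_div (by positivity), div_le_div_iff₀ (by positivity) (by positivity)]
        nlinarith [mul_nonneg (mul_nonneg (sq_nonneg X) (by linarith : (0 : ℚ) ≤ Z))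
          (by linarith : 0 ≤ Z - 4 * X), mul_nonneg (mul_nonneg (by linarith : (0 : ℚ) ≤ X)
          (by linarith : (0 : ℚ) ≤ Z)) (by linarith : 0 ≤ X - 1)]
    _ < W * (Y * 2 - 1) * (Z * X * 2 - 1) / (Y * (X * 2 - 1) ^ 2 * (W * 2 - 1)) := by
        rw [div_lt_div_iff₀ (by positivity)
          (mul_pos (by positivity) (by linarith))]
        have hF : 0 < (Z * X * 2 - 1) * (X * 2 - 1) ^ 2 := by nlinarith
        nlinarith [mul_lt_mul_of_pos_left (by nlinarith : Y * (W * 2 - 1) < 2 * W * (Y * 2 - 1)) hF]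

theorem grassTerm_lt_succ (hn : 2 * d + 1 ≤ n) (hjd : j ≤ d) (hhj : h < j)
    (hhi : h + 1 ≤ d - i) :
    grassTerm 2 n d j i h < grassTerm 2 n d j i (h + 1) := by
  rw [grassTerm_succ one_lt_two hhj (by omega)]
  exact lt_mul_of_one_lt_left (grassTerm_pos one_lt_two hjd hhj.le (by omega))
    (one_lt_stepRatio hn hhj hhi)

theorem grassTerm_sub_succ_index_lt (hn : 2 * d + 1 ≤ n) (hjd : j ≤ d) (hhj : h < j)
    (hhi : h + 1 ≤ d - i) :
    grassTerm 2 n d j i h - grassTerm 2 n d j (i + 1) h <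
      grassTerm 2 n d j i (h + 1) - grassTerm 2 n d j (i + 1) (h + 1) := by
  have hin : d + i < n := by omega
  rw [grassTerm_succ_index one_lt_two (by omega) hin,
    grassTerm_succ_index one_lt_two (by omega) hin]
  calc grassTerm 2 n d j i h - shiftRatio 2 n d i h * grassTerm 2 n d j i h
      = (1 - shiftRatio 2 n d i h) * grassTerm 2 n d j i h := by ring
    _ ≤ (1 - shiftRatio 2 n d i (h + 1)) * grassTerm 2 n d j i h := by
        gcongr
        · exact grassTerm_nonneg one_le_two
        · exact shiftRatio_succ_le one_lt_two hhi hin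
    _ < (1 - shiftRatio 2 n d i (h + 1)) * grassTerm 2 n d j i (h + 1) :=
        mul_lt_mul_of_pos_left (grassTerm_lt_succ hn hjd hhj hhi)
          (sub_pos.2 (shiftRatio_lt_one one_lt_two h.succ_pos hhi hin))
    _ = _ := by ring

theorem grassTerm_add_succ_index_lt (hn : 2 * d + 1 ≤ n) (hjd : j ≤ d) (hhj : h < j)
    (hhi : h + 1 ≤ d - i) :
    grassTerm 2 n d j i h + grassTerm 2 n d j (i + 1) h <
      grassTerm 2 n d j i (h + 1) + grassTerm 2 n d j (i + 1) (h + 1) := by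
  rcases hhi.lt_or_eq with hlt | heq
  · exact add_lt_add (grassTerm_lt_succ hn hjd hhj hhi) (grassTerm_lt_succ hn hjd hhj (by omega))
  · rw [grassTerm_eq_zero (by omega : d - (i + 1) < h + 1), add_zero,
      grassTerm_succ_index one_lt_two (by omega) (by omega),
      grassTerm_succ one_lt_two hhj (by omega)]
    calc grassTerm 2 n d j i h + shiftRatio 2 n d i h * grassTerm 2 n d j i h
        = (1 + shiftRatio 2 n d i h) * grassTerm 2 n d j i h := by ring
      _ < stepRatio 2 n d j i h * grassTerm 2 n d j i h :=
        mul_lt_mul_of_pos_right (one_add_shiftRatio_lt_stepRatio hn hhj heq)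
          (grassTerm_pos one_lt_two hjd hhj.le (by omega))

end PowersOfTwo

theorem grassG_abs_strict_anti_q2 (n d i j : ℕ) (hn : 2 * d + 1 ≤ n)
    (hi : i ≤ d - 1) (hj1 : 1 ≤ j) (hj2 : j ≤ d) :
    |grassG (2 : ℚ) n d j (i + 1)| < |grassG (2 : ℚ) n d j i| := by
  set m := min j (d - i)
  have hvanish : ∀ h, m < h → h ≤ j →
      grassTerm 2 n d j i h = 0 ∧ grassTerm 2 n d j (i + 1) h = 0 :=
    fun h hmh hhj => ⟨grassTerm_eq_zero (by omega), grassTerm_eq_zero (by omega)⟩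
  apply abs_lt_abs_of_neg_one_pow_mul_pos (j - m)
  · rw [grassG_eq_sum_grassTerm, grassG_eq_sum_grassTerm, ← sum_sub_distrib]
    simp_rw [← mul_sub]
    rw [neg_one_pow_mul_alternating_sum_of_eq_zero _ (min_le_left _ _) fun h hmh hhj => by
      rw [(hvanish h hmh hhj).1, (hvanish h hmh hhj).2, sub_zero]]
    refine alternating_sum_pos _ (by omega) (by rw [grassTerm_succ_index_zero, sub_self])
      fun h hh => grassTerm_sub_succ_index_lt hn hj2 (by omega) (by omega)
  · rw [grassG_eq_sum_grassTerm, grassG_eq_sum_grassTerm, ← sum_add_distrib]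
    simp_rw [← mul_add]
    rw [neg_one_pow_mul_alternating_sum_of_eq_zero _ (min_le_left _ _) fun h hmh hhj => by
      rw [(hvanish h hmh hhj).1, (hvanish h hmh hhj).2, add_zero]]
    refine alternating_sum_pos _ (by omega)
      (add_nonneg (grassTerm_nonneg one_le_two) (grassTerm_nonneg one_le_two))
      fun h hh => grassTerm_add_succ_index_lt hn hj2 (by omega) (by omega)
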